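/- arXiv:1705.00765 — 2 statements merged into one kernel-verified Lean document; each statement's English description precedes it below -/
import Mathlib

section
/- Let n ≥ 1 and let f : (0,∞) × ℝⁿ → ℝ be a smooth positive solution of the heat equation ∂f/∂t = Δf that is ℤⁿ-periodic in the space variable. Let v = −ln f − (n/2)ln(4πt) and P = 2Δv − |∇v|² − 2n/t. Then P(t,x) ≤ 0 for all t > 0 and all x ∈ ℝⁿ. -/
open MeasureTheory Real

noncomputable section

/-- Partial derivative of `g` at `x` in the `i`-th coordinate direction. -/
def pd {n : ℕ} (i : Fin n) (g : (Fin n → ℝ) → ℝ) (x : Fin n → ℝ) : ℝ :=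
  fderiv ℝ g x (Pi.single i 1)

/-- Squared Euclidean norm of the (spatial) gradient of `g` at `x`. -/
def gradSq {n : ℕ} (g : (Fin n → ℝ) → ℝ) (x : Fin n → ℝ) : ℝ :=
  ∑ i, (pd i g x) ^ 2

/-- The (spatial) Laplacian of `g` at `x`. -/
def lap {n : ℕ} (g : (Fin n → ℝ) → ℝ) (x : Fin n → ℝ) : ℝ :=
  ∑ i, pd i (pd i g) x

/-- The `(i,j)` entry of the Hessian of `g` at `x`. -/
def hess {n : ℕ} (i j : Fin n) (g : (Fin n → ℝ) → ℝ) (x : Fin n → ℝ) : ℝ :=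
  pd i (pd j g) x

/-!
Write `w = log f`. The heat equation becomes `∂ₜw = Δw + |∇w|²`, and since `v = -w - (n/2) log(4πt)`
the quantity `P + 2n/t` is `H = -2Δw - |∇w|²`. Differentiating the equation for `w` and using the
flat Bochner formula `Δ|∇w|² = 2|∇²w|² + 2⟨∇w, ∇Δw⟩` gives
`∂ₜH = ΔH + 2⟨∇w, ∇H⟩ - 2|∇²w|²`, while `|∇²w|² ≥ (Δw)²/n ≥ H²/(4n)` wherever `H ≥ 0`.

Fix `0 < σ < t`. By periodicity `(s - σ) H` attains its maximum on `[σ, t] × ℝⁿ`. At a maximum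
point with value above `2n` we have `s > σ`, `∇H = 0`, `ΔH ≤ 0` and `H + (s - σ) ∂ₜH ≥ 0`, which
contradicts the evolution inequality. Hence `(t - σ) H ≤ 2n`, and `σ → 0` gives `H ≤ 2n/t`.
-/

open scoped ContDiff
open Set Filter Topology

theorem HasDerivAt.nonneg_of_isMaxOn_Icc {θ : ℝ → ℝ} {a b c : ℝ} (hab : a < b)
    (hθ : HasDerivAt θ c b) (hmax : IsMaxOn θ (Icc a b) b) : 0 ≤ c := by
  have hseg : segment ℝ b (b + (a - b)) ⊆ Icc a b := by
    rw [add_sub_cancel, segment_eq_Icc']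
    simp [hab.le]
  have h := hmax.localize.hasFDerivWithinAt_nonpos hθ.hasFDerivAt.hasFDerivWithinAt
    (mem_posTangentConeAt_of_segment_subset hseg)
  simp only [ContinuousLinearMap.toSpanSingleton_apply, smul_eq_mul] at h
  nlinarith

theorem IsLocalMax.nonpos_of_hasDerivAt_of_hasDerivAt {φ ψ : ℝ → ℝ} {a c : ℝ}
    (hmax : IsLocalMax φ a) (hφ : ∀ᶠ s in 𝓝 a, HasDerivAt φ (ψ s) s) (hψ : HasDerivAt ψ c a) :
    c ≤ 0 := by
  by_contra! hc
  have hψa : ψ a = 0 := hmax.hasDerivAt_eq_zero hφ.self_of_nhds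
  have hψpos : ∀ᶠ s in 𝓝[>] a, 0 < ψ s := by
    filter_upwards [((hasDerivAt_iff_tendsto_slope.mp hψ).mono_left
      (nhdsGT_le_nhdsNE a)).eventually (eventually_gt_nhds hc), self_mem_nhdsWithin]
      with s hs (has : a < s)
    rw [slope_def_field, hψa, sub_zero] at hs
    exact (div_pos_iff_of_pos_right (sub_pos.2 has)).mp hs
  obtain ⟨u, hau : a < u, hu⟩ := mem_nhdsGT_iff_exists_Ioc_subset.mp
    (hψpos.and ((hφ.and hmax).filter_mono nhdsWithin_le_nhds))
  have hderiv : ∀ s ∈ Icc a u, HasDerivAt φ (ψ s) s := by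
    rintro s ⟨has, hsu⟩
    rcases has.eq_or_lt with rfl | has
    · exact hφ.self_of_nhds
    · exact (hu ⟨has, hsu⟩).2.1
  obtain ⟨ξ, hξ, hslope⟩ := exists_hasDerivAt_eq_slope φ ψ hau
    (fun s hs ↦ (hderiv s hs).continuousAt.continuousWithinAt)
    (fun s hs ↦ hderiv s (Ioo_subset_Icc_self hs))
  have hφu : φ u ≤ φ a := (hu ⟨hau, le_rfl⟩).2.2
  have hpos : 0 < (φ u - φ a) / (u - a) := hslope ▸ (hu (Ioo_subset_Ioc_self hξ)).1
  linarith [(div_pos_iff_of_pos_right (sub_pos.2 hau)).mp hpos]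

theorem sq_trace_le_card_mul_sum_sq {R ι : Type*} [Field R] [LinearOrder R]
    [IsStrictOrderedRing R] [Fintype ι] (A : Matrix ι ι R) :
    A.trace ^ 2 ≤ Fintype.card ι * ∑ i, ∑ j, A i j ^ 2 := by
  calc A.trace ^ 2 ≤ Fintype.card ι * ∑ i, A i i ^ 2 := sq_sum_le_card_mul_sum_sq
    _ ≤ Fintype.card ι * ∑ i, ∑ j, A i j ^ 2 := by
      gcongr with i
      exact Finset.single_le_sum (f := fun j ↦ A i j ^ 2) (fun _ _ ↦ sq_nonneg _)
        (Finset.mem_univ i)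

theorem exists_isMaxOn_prod_univ_of_periodic {α : Type*} [TopologicalSpace α] {n : ℕ}
    {T : Set α} (hT : IsCompact T) (hTne : T.Nonempty) {Q : α × (Fin n → ℝ) → ℝ}
    (hQ : ContinuousOn Q (T ×ˢ univ))
    (hper : ∀ t ∈ T, ∀ x (m : Fin n → ℤ), Q (t, x + fun i ↦ (m i : ℝ)) = Q (t, x)) :
    ∃ p ∈ T ×ˢ univ, IsMaxOn Q (T ×ˢ univ) p := by
  obtain ⟨p, hpK, hmax⟩ := (hT.prod (isCompact_Icc (a := (0 : Fin n → ℝ)) (b := 1))).exists_isMaxOn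
    (hTne.prod (nonempty_Icc.2 zero_le_one)) (hQ.mono (prod_mono le_rfl (subset_univ _)))
  refine ⟨p, ⟨hpK.1, trivial⟩, fun ⟨t, y⟩ ⟨ht, _⟩ ↦ ?_⟩
  have hfract : (t, fun i ↦ Int.fract (y i)) ∈ T ×ˢ Icc (0 : Fin n → ℝ) 1 :=
    ⟨ht, fun i ↦ Int.fract_nonneg _, fun i ↦ (Int.fract_lt_one _).le⟩
  have hy : (fun i ↦ Int.fract (y i)) + (fun i ↦ (⌊y i⌋ : ℝ)) = y :=
    funext fun i ↦ Int.fract_add_floor (y i)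
  have hshift := hper t ht (fun i ↦ Int.fract (y i)) (fun i ↦ ⌊y i⌋)
  rw [hy] at hshift
  exact hshift.trans_le (hmax hfract)

variable {E : Type*} [NormedAddCommGroup E] [NormedSpace ℝ E]

-- Defined through `fderiv` rather than `lineDeriv`, so that the calculus rules of `fderiv` apply
-- verbatim.
def dirDeriv (v : E) (F : E → ℝ) (p : E) : ℝ := fderiv ℝ F p v

section DirDeriv

variable {U : Set E} {F G : E → ℝ} {p v : E}

theorem ContDiffOn.differentiableAt_of_isOpen {F' : Type*} [NormedAddCommGroup F']
    [NormedSpace ℝ F'] {F : E → F'} (hF : ContDiffOn ℝ ∞ F U) (hU : IsOpen U) (hp : p ∈ U) :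
    DifferentiableAt ℝ F p :=
  (hF.differentiableOn (by simp)).differentiableAt (hU.mem_nhds hp)

theorem ContDiffOn.dirDeriv (hF : ContDiffOn ℝ ∞ F U) (hU : IsOpen U) (v : E) :
    ContDiffOn ℝ ∞ (dirDeriv v F) U :=
  (ContinuousLinearMap.apply ℝ ℝ v).contDiff.comp_contDiffOn (hF.fderiv_of_isOpen hU (by simp))

theorem Set.EqOn.dirDeriv (h : EqOn F G U) (hU : IsOpen U) (v : E) :
    EqOn (dirDeriv v F) (dirDeriv v G) U := fun _ hp ↦ by
  rw [_root_.dirDeriv, _root_.dirDeriv, (h.eventuallyEq_of_mem (hU.mem_nhds hp)).fderiv_eq]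

theorem Set.EqOn.dirDeriv_comp_add_right {c : E} (h : EqOn (fun q ↦ F (q + c)) F U)
    (hU : IsOpen U) (v : E) :
    EqOn (fun q ↦ _root_.dirDeriv v F (q + c)) (_root_.dirDeriv v F) U := fun q hq ↦ by
  simpa [_root_.dirDeriv, fderiv_comp_add_right] using h.dirDeriv hU v hq

theorem dirDeriv_comm (hF : ContDiffOn ℝ ∞ F U) (hU : IsOpen U) (hp : p ∈ U) (u v : E) :
    dirDeriv u (dirDeriv v F) p = dirDeriv v (dirDeriv u F) p := by
  have hsymm : IsSymmSndFDerivAt ℝ F p :=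
    ((hF p hp).contDiffAt (hU.mem_nhds hp)).isSymmSndFDerivAt
      (by simp only [minSmoothness_of_isRCLikeNormedField]; decide)
  have hF' := (hF.fderiv_of_isOpen hU (m := ∞) (by simp)).differentiableAt_of_isOpen hU hp
  change fderiv ℝ (fun q ↦ fderiv ℝ F q v) p u = fderiv ℝ (fun q ↦ fderiv ℝ F q u) p v
  simp [fderiv_clm_apply hF' (differentiableAt_const _), hsymm u v]

theorem dirDeriv_add (hF : DifferentiableAt ℝ F p) (hG : DifferentiableAt ℝ G p) :
    dirDeriv v (fun q ↦ F q + G q) p = dirDeriv v F p + dirDeriv v G p := by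
  simp [dirDeriv, fderiv_fun_add hF hG]

theorem dirDeriv_const_mul (hF : DifferentiableAt ℝ F p) (a : ℝ) :
    dirDeriv v (fun q ↦ a * F q) p = a * dirDeriv v F p := by
  simp [dirDeriv, fderiv_const_mul hF]

theorem dirDeriv_linComb (hF : DifferentiableAt ℝ F p) (hG : DifferentiableAt ℝ G p)
    (a b : ℝ) :
    dirDeriv v (fun q ↦ a * F q + b * G q) p = a * dirDeriv v F p + b * dirDeriv v G p := by
  rw [dirDeriv_add (hF.const_mul a) (hG.const_mul b), dirDeriv_const_mul hF,
    dirDeriv_const_mul hG]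

theorem dirDeriv_mul (hF : DifferentiableAt ℝ F p) (hG : DifferentiableAt ℝ G p) :
    dirDeriv v (fun q ↦ F q * G q) p = dirDeriv v F p * G p + F p * dirDeriv v G p := by
  simp only [dirDeriv, fderiv_fun_mul hF hG, add_apply,
    smul_apply, smul_eq_mul]
  ring

theorem dirDeriv_sum {ι : Type*} {s : Finset ι} {H : ι → E → ℝ}
    (hH : ∀ i ∈ s, DifferentiableAt ℝ (H i) p) :
    dirDeriv v (fun q ↦ ∑ i ∈ s, H i q) p = ∑ i ∈ s, dirDeriv v (H i) p := by
  simp [dirDeriv, fderiv_fun_sum hH]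

theorem dirDeriv_exp (hF : DifferentiableAt ℝ F p) :
    dirDeriv v (fun q ↦ exp (F q)) p = exp (F p) * dirDeriv v F p := by
  simp [dirDeriv, hF.hasFDerivAt.exp.fderiv]

theorem dirDeriv_dirDeriv_exp (hF : ContDiffOn ℝ ∞ F U) (hU : IsOpen U) (hp : p ∈ U) (v : E) :
    dirDeriv v (dirDeriv v (fun q ↦ exp (F q))) p =
      exp (F p) * (dirDeriv v (dirDeriv v F) p + dirDeriv v F p ^ 2) := by
  have hexp : EqOn (dirDeriv v (fun q ↦ exp (F q))) (fun q ↦ exp (F q) * dirDeriv v F q) U :=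
    fun q hq ↦ dirDeriv_exp (hF.differentiableAt_of_isOpen hU hq)
  have hFp := hF.differentiableAt_of_isOpen hU hp
  rw [hexp.dirDeriv hU v hp,
    dirDeriv_mul hFp.exp ((hF.dirDeriv hU v).differentiableAt_of_isOpen hU hp), dirDeriv_exp hFp]
  ring

theorem hasDerivAt_dirDeriv_line {h : E} {s : ℝ} (hF : DifferentiableAt ℝ F (p + s • h)) :
    HasDerivAt (fun s ↦ F (p + s • h)) (dirDeriv h F (p + s • h)) s := by
  have hline : HasDerivAt (fun s : ℝ ↦ p + s • h) h s := by
    simpa using ((hasDerivAt_id s).smul_const h).const_add p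
  exact hF.hasFDerivAt.comp_hasDerivAt s hline

theorem dirDeriv_eq_zero_and_nonpos_of_isLocalMax {h : E} (hF : ContDiffOn ℝ ∞ F U)
    (hU : IsOpen U) (hp : p ∈ U) (hmax : IsLocalMax (fun s : ℝ ↦ F (p + s • h)) 0) :
    dirDeriv h F p = 0 ∧ dirDeriv h (dirDeriv h F) p ≤ 0 := by
  have hline : ∀ᶠ s in 𝓝 (0 : ℝ), p + s • h ∈ U :=
    (by fun_prop : Continuous fun s : ℝ ↦ p + s • h).continuousAt.preimage_mem_nhds
      (by simpa using hU.mem_nhds hp)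
  have hφ : ∀ᶠ s in 𝓝 (0 : ℝ),
      HasDerivAt (fun s ↦ F (p + s • h)) (dirDeriv h F (p + s • h)) s :=
    hline.mono fun s hs ↦ hasDerivAt_dirDeriv_line (hF.differentiableAt_of_isOpen hU hs)
  have hψ := hasDerivAt_dirDeriv_line (s := 0)
    ((hF.dirDeriv hU h).differentiableAt_of_isOpen hU hline.self_of_nhds)
  constructor
  · simpa using hmax.hasDerivAt_eq_zero hφ.self_of_nhds
  · simpa using hmax.nonpos_of_hasDerivAt_of_hasDerivAt hφ hψ

end DirDeriv

section SpaceTime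

variable {n : ℕ}

def timeDir (n : ℕ) : ℝ × (Fin n → ℝ) := (1, 0)

def spaceDir (i : Fin n) : ℝ × (Fin n → ℝ) := (0, Pi.single i 1)

def spaceLap (F : ℝ × (Fin n → ℝ) → ℝ) : ℝ × (Fin n → ℝ) → ℝ :=
  fun p ↦ ∑ i, dirDeriv (spaceDir i) (dirDeriv (spaceDir i) F) p

def gradInner (F G : ℝ × (Fin n → ℝ) → ℝ) : ℝ × (Fin n → ℝ) → ℝ :=
  fun p ↦ ∑ i, dirDeriv (spaceDir i) F p * dirDeriv (spaceDir i) G p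

def hessNormSq (F : ℝ × (Fin n → ℝ) → ℝ) : ℝ × (Fin n → ℝ) → ℝ :=
  fun p ↦ ∑ i, ∑ j, dirDeriv (spaceDir i) (dirDeriv (spaceDir j) F) p ^ 2

variable {U : Set (ℝ × (Fin n → ℝ))} {F G H w : ℝ × (Fin n → ℝ) → ℝ} {p : ℝ × (Fin n → ℝ)}

theorem gradInner_comm (F G : ℝ × (Fin n → ℝ) → ℝ) : gradInner F G = gradInner G F := by
  ext p
  simp only [gradInner, mul_comm]

theorem ContDiffOn.spaceLap (hF : ContDiffOn ℝ ∞ F U) (hU : IsOpen U) :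
    ContDiffOn ℝ ∞ (spaceLap F) U :=
  .sum fun _ _ ↦ (hF.dirDeriv hU _).dirDeriv hU _

theorem ContDiffOn.gradInner (hF : ContDiffOn ℝ ∞ F U) (hG : ContDiffOn ℝ ∞ G U)
    (hU : IsOpen U) : ContDiffOn ℝ ∞ (gradInner F G) U :=
  .sum fun _ _ ↦ (hF.dirDeriv hU _).mul (hG.dirDeriv hU _)

theorem Set.EqOn.spaceLap (h : EqOn F G U) (hU : IsOpen U) :
    EqOn (spaceLap F) (spaceLap G) U := fun _ hp ↦
  Finset.sum_congr rfl fun _ _ ↦ ((h.dirDeriv hU _).dirDeriv hU _) hp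

theorem Set.EqOn.gradInner_right (h : EqOn F G U) (hU : IsOpen U) :
    EqOn (gradInner H F) (gradInner H G) U := fun _ hp ↦
  Finset.sum_congr rfl fun _ _ ↦ by rw [h.dirDeriv hU _ hp]

theorem spaceLap_linComb (hF : ContDiffOn ℝ ∞ F U) (hG : ContDiffOn ℝ ∞ G U) (hU : IsOpen U)
    (hp : p ∈ U) (a b : ℝ) :
    spaceLap (fun q ↦ a * F q + b * G q) p = a * spaceLap F p + b * spaceLap G p := by
  have hfirst : ∀ i, EqOn (dirDeriv (spaceDir i) (fun q ↦ a * F q + b * G q))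
      (fun q ↦ a * dirDeriv (spaceDir i) F q + b * dirDeriv (spaceDir i) G q) U :=
    fun _ q hq ↦ dirDeriv_linComb (hF.differentiableAt_of_isOpen hU hq)
      (hG.differentiableAt_of_isOpen hU hq) a b
  simp only [spaceLap, (hfirst _).dirDeriv hU _ hp,
    dirDeriv_linComb ((hF.dirDeriv hU _).differentiableAt_of_isOpen hU hp)
      ((hG.dirDeriv hU _).differentiableAt_of_isOpen hU hp),
    Finset.sum_add_distrib, Finset.mul_sum]

theorem gradInner_linComb (hF : DifferentiableAt ℝ F p) (hG : DifferentiableAt ℝ G p)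
    (a b : ℝ) :
    gradInner H (fun q ↦ a * F q + b * G q) p = a * gradInner H F p + b * gradInner H G p := by
  simp only [gradInner, dirDeriv_linComb hF hG, Finset.mul_sum, ← Finset.sum_add_distrib]
  exact Finset.sum_congr rfl fun _ _ ↦ by ring

theorem dirDeriv_spaceLap (hF : ContDiffOn ℝ ∞ F U) (hU : IsOpen U) (hp : p ∈ U)
    (v : ℝ × (Fin n → ℝ)) : dirDeriv v (spaceLap F) p = spaceLap (dirDeriv v F) p := by
  have hcomm : ∀ i, EqOn (dirDeriv v (dirDeriv (spaceDir i) F))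
      (dirDeriv (spaceDir i) (dirDeriv v F)) U := fun _ _ hq ↦ dirDeriv_comm hF hU hq _ _
  unfold spaceLap
  rw [dirDeriv_sum fun _ _ ↦
    ((hF.dirDeriv hU _).dirDeriv hU _).differentiableAt_of_isOpen hU hp]
  refine Finset.sum_congr rfl fun i _ ↦ ?_
  rw [dirDeriv_comm (hF.dirDeriv hU _) hU hp, (hcomm i).dirDeriv hU _ hp]

theorem dirDeriv_gradInner (hF : ContDiffOn ℝ ∞ F U) (hG : ContDiffOn ℝ ∞ G U) (hU : IsOpen U)
    (hp : p ∈ U) (v : ℝ × (Fin n → ℝ)) :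
    dirDeriv v (gradInner F G) p =
      gradInner (dirDeriv v F) G p + gradInner F (dirDeriv v G) p := by
  unfold gradInner
  rw [dirDeriv_sum fun _ _ ↦ ((hF.dirDeriv hU _).mul (hG.dirDeriv hU _)
    |>.differentiableAt_of_isOpen hU hp), ← Finset.sum_add_distrib]
  refine Finset.sum_congr rfl fun i _ ↦ ?_
  rw [dirDeriv_mul ((hF.dirDeriv hU _).differentiableAt_of_isOpen hU hp)
    ((hG.dirDeriv hU _).differentiableAt_of_isOpen hU hp), dirDeriv_comm hF hU hp,
    dirDeriv_comm hG hU hp]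

theorem dirDeriv_gradInner_self (hF : ContDiffOn ℝ ∞ F U) (hU : IsOpen U) (hp : p ∈ U)
    (v : ℝ × (Fin n → ℝ)) :
    dirDeriv v (gradInner F F) p = 2 * gradInner F (dirDeriv v F) p := by
  rw [dirDeriv_gradInner hF hF hU hp, gradInner_comm (dirDeriv v F)]
  ring

theorem spaceLap_gradInner_self (hF : ContDiffOn ℝ ∞ F U) (hU : IsOpen U) (hp : p ∈ U) :
    spaceLap (gradInner F F) p = 2 * hessNormSq F p + 2 * gradInner F (spaceLap F) p := by
  have hF' : ∀ i, ContDiffOn ℝ ∞ (dirDeriv (spaceDir i) F) U := fun _ ↦ hF.dirDeriv hU _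
  have hgrad : ∀ j, EqOn (dirDeriv (spaceDir j) (gradInner F F))
      (fun q ↦ 2 * gradInner F (dirDeriv (spaceDir j) F) q) U :=
    fun _ _ hq ↦ dirDeriv_gradInner_self hF hU hq _
  have hlap : gradInner F (spaceLap F) p =
      ∑ j, gradInner F (dirDeriv (spaceDir j) (dirDeriv (spaceDir j) F)) p := by
    unfold gradInner spaceLap
    rw [Finset.sum_comm]
    refine Finset.sum_congr rfl fun i _ ↦ ?_
    rw [dirDeriv_sum fun j _ ↦ ((hF' j).dirDeriv hU _).differentiableAt_of_isOpen hU hp,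
      Finset.mul_sum]
  have hterm : ∀ j, dirDeriv (spaceDir j) (dirDeriv (spaceDir j) (gradInner F F)) p =
      2 * ∑ i, dirDeriv (spaceDir i) (dirDeriv (spaceDir j) F) p ^ 2 +
      2 * gradInner F (dirDeriv (spaceDir j) (dirDeriv (spaceDir j) F)) p := by
    intro j
    rw [(hgrad j).dirDeriv hU _ hp,
      dirDeriv_const_mul ((hF.gradInner (hF' j) hU).differentiableAt_of_isOpen hU hp),
      dirDeriv_gradInner hF (hF' j) hU hp, gradInner]
    simp only [sq]
    ring
  rw [spaceLap, Finset.sum_congr rfl fun j _ ↦ hterm j, Finset.sum_add_distrib,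
    ← Finset.mul_sum, ← Finset.mul_sum, hessNormSq, Finset.sum_comm, hlap]

theorem dirDeriv_time_log_of_heat (hF : ContDiffOn ℝ ∞ F U) (hU : IsOpen U)
    (hpos : ∀ q ∈ U, 0 < F q) (hheat : ∀ q ∈ U, dirDeriv (timeDir n) F q = spaceLap F q)
    (hp : p ∈ U) :
    dirDeriv (timeDir n) (fun q ↦ log (F q)) p =
      spaceLap (fun q ↦ log (F q)) p + gradInner (fun q ↦ log (F q)) (fun q ↦ log (F q)) p := by
  set w := fun q ↦ log (F q)
  have hw : ContDiffOn ℝ ∞ w U := hF.log fun q hq ↦ (hpos q hq).ne'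
  have hexp : EqOn F (fun q ↦ exp (w q)) U := fun q hq ↦ (exp_log (hpos q hq)).symm
  have h := hheat p hp
  rw [hexp.dirDeriv hU _ hp, hexp.spaceLap hU hp,
    dirDeriv_exp (hw.differentiableAt_of_isOpen hU hp)] at h
  simp only [spaceLap, dirDeriv_dirDeriv_exp hw hU hp, ← Finset.mul_sum] at h
  rw [mul_right_inj' (exp_pos _).ne'] at h
  rw [h, spaceLap, gradInner, ← Finset.sum_add_distrib]
  simp only [sq]

def harnack (w : ℝ × (Fin n → ℝ) → ℝ) : ℝ × (Fin n → ℝ) → ℝ :=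
  fun p ↦ -2 * spaceLap w p - gradInner w w p

theorem ContDiffOn.harnack (hw : ContDiffOn ℝ ∞ w U) (hU : IsOpen U) :
    ContDiffOn ℝ ∞ (harnack w) U :=
  (contDiffOn_const.mul (hw.spaceLap hU)).sub (hw.gradInner hw hU)

theorem Set.EqOn.harnack_comp_add_right {c : ℝ × (Fin n → ℝ)}
    (h : EqOn (fun q ↦ w (q + c)) w U) (hU : IsOpen U) :
    EqOn (fun q ↦ harnack w (q + c)) (harnack w) U := fun q hq ↦ by
  have h1 := fun i ↦ h.dirDeriv_comp_add_right hU (spaceDir i)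
  have h2 := fun i ↦ (h1 i).dirDeriv_comp_add_right hU (spaceDir i)
  simp only [_root_.harnack, _root_.spaceLap, _root_.gradInner, h1 _ hq, h2 _ hq]

theorem harnack_evolution (hw : ContDiffOn ℝ ∞ w U) (hU : IsOpen U)
    (hheat : ∀ q ∈ U, dirDeriv (timeDir n) w q = spaceLap w q + gradInner w w q) (hp : p ∈ U) :
    dirDeriv (timeDir n) (harnack w) p =
      spaceLap (harnack w) p + 2 * gradInner w (harnack w) p - 2 * hessNormSq w p := by
  have hL := hw.spaceLap hU
  have hG := hw.gradInner hw hU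
  have hLp := hL.differentiableAt_of_isOpen hU hp
  have hGp := hG.differentiableAt_of_isOpen hU hp
  have hP : harnack w = fun q ↦ (-2) * spaceLap w q + (-1) * gradInner w w q := by
    ext q
    simp only [harnack]
    ring
  have hwt : EqOn (dirDeriv (timeDir n) w) (fun q ↦ 1 * spaceLap w q + 1 * gradInner w w q) U :=
    fun q hq ↦ by simp only [hheat q hq, one_mul]
  have hPt := dirDeriv_linComb (v := timeDir n) hLp hGp (-2) (-1)
  have hLt := dirDeriv_spaceLap hw hU hp (timeDir n)
  have hLwt := hwt.spaceLap hU hp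
  have hLwt' := spaceLap_linComb hL hG hU hp 1 1
  have hGt := dirDeriv_gradInner_self hw hU hp (timeDir n)
  have hGwt := hwt.gradInner_right hU (H := w) hp
  have hGwt' := gradInner_linComb (H := w) hLp hGp 1 1
  have hLP := spaceLap_linComb hL hG hU hp (-2) (-1)
  have hGP := gradInner_linComb (H := w) hLp hGp (-2) (-1)
  have hBochner := spaceLap_gradInner_self hw hU hp
  rw [hP]
  linear_combination hPt - 2 * hLt - 2 * hLwt - 2 * hLwt' - hGt - 2 * hGwt - 2 * hGwt' - hLP
    - 2 * hGP - hBochner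

theorem harnack_timeDeriv_le (hw : ContDiffOn ℝ ∞ w U) (hU : IsOpen U)
    (hheat : ∀ q ∈ U, dirDeriv (timeDir n) w q = spaceLap w q + gradInner w w q) (hp : p ∈ U)
    (hcrit : ∀ i, dirDeriv (spaceDir i) (harnack w) p = 0) (hlap : spaceLap (harnack w) p ≤ 0)
    (hnonneg : 0 ≤ harnack w p) :
    2 * n * dirDeriv (timeDir n) (harnack w) p ≤ -harnack w p ^ 2 := by
  have hgrad : gradInner w (harnack w) p = 0 := by simp [gradInner, hcrit]
  have htrace : spaceLap w p ^ 2 ≤ n * hessNormSq w p := by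
    have h := sq_trace_le_card_mul_sum_sq
      (Matrix.of fun i j ↦ dirDeriv (spaceDir i) (dirDeriv (spaceDir j) w) p)
    rwa [Fintype.card_fin] at h
  have hle : harnack w p ≤ -2 * spaceLap w p := by
    have : 0 ≤ gradInner w w p := Finset.sum_nonneg fun _ _ ↦ mul_self_nonneg _
    simp only [harnack]
    linarith
  have hsq : harnack w p ^ 2 ≤ 4 * n * hessNormSq w p := by nlinarith
  rw [harnack_evolution hw hU hheat hp, hgrad]
  nlinarith [mul_nonpos_of_nonneg_of_nonpos (Nat.cast_nonneg n : (0 : ℝ) ≤ n) hlap]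

theorem hasDerivAt_timeSlice {t : ℝ} {x : Fin n → ℝ} (hF : DifferentiableAt ℝ F (t, x)) :
    HasDerivAt (fun s ↦ F (s, x)) (dirDeriv (timeDir n) F (t, x)) t := by
  have hline : ∀ s : ℝ, ((0 : ℝ), x) + s • timeDir n = (s, x) := fun s ↦ by simp [timeDir]
  simpa [hline] using hasDerivAt_dirDeriv_line (p := ((0 : ℝ), x)) (h := timeDir n) (s := t)
    (by rwa [hline])

end SpaceTime

section MaximumPrinciple

variable {n : ℕ} {w : ℝ × (Fin n → ℝ) → ℝ}
  (hw : ContDiffOn ℝ ∞ w (Ioi 0 ×ˢ univ))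
  (hheat : ∀ q ∈ Ioi (0 : ℝ) ×ˢ (univ : Set (Fin n → ℝ)),
    dirDeriv (timeDir n) w q = spaceLap w q + gradInner w w q)
  (hper : ∀ m : Fin n → ℤ, EqOn (fun q ↦ w (q + (0, fun i ↦ (m i : ℝ)))) w (Ioi 0 ×ˢ univ))
include hw hheat

theorem mul_harnack_le_of_isMaxOn {σ t : ℝ} (hσ : 0 < σ) {p : ℝ × (Fin n → ℝ)}
    (hp : p ∈ Icc σ t ×ˢ univ)
    (hmax : ∀ q ∈ Icc σ t ×ˢ univ, (q.1 - σ) * harnack w q ≤ (p.1 - σ) * harnack w p) :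
    (p.1 - σ) * harnack w p ≤ 2 * n := by
  obtain ⟨⟨hσp, hpt⟩, -⟩ := hp
  have hU : IsOpen (Ioi (0 : ℝ) ×ˢ (univ : Set (Fin n → ℝ))) := isOpen_Ioi.prod isOpen_univ
  have hP := hw.harnack hU
  have hpU : p ∈ Ioi 0 ×ˢ univ := ⟨hσ.trans_le hσp, trivial⟩
  by_contra! hQ
  have hτ : 0 < p.1 - σ := by
    rcases hσp.eq_or_lt with h | h
    · simp only [← h, sub_self, zero_mul] at hQ
      linarith [(Nat.cast_nonneg n : (0 : ℝ) ≤ n)]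
    · exact sub_pos.2 h
  have hPpos : 0 < harnack w p :=
    pos_of_mul_pos_right (lt_of_le_of_lt (by positivity) hQ) hτ.le
  have hspace : ∀ i, dirDeriv (spaceDir i) (harnack w) p = 0 ∧
      dirDeriv (spaceDir i) (dirDeriv (spaceDir i) (harnack w)) p ≤ 0 := fun i ↦
    dirDeriv_eq_zero_and_nonpos_of_isLocalMax hP hU hpU <| Eventually.of_forall fun s ↦ by
      have hfst : (p + s • spaceDir i).1 = p.1 := by simp [spaceDir]
      have := hmax (p + s • spaceDir i) ⟨hfst ▸ ⟨hσp, hpt⟩, trivial⟩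
      rw [hfst] at this
      simpa using le_of_mul_le_mul_left this hτ
  have htime : 0 ≤ harnack w p + (p.1 - σ) * dirDeriv (timeDir n) (harnack w) p := by
    have hθ : HasDerivAt (fun s ↦ (s - σ) * harnack w (s, p.2))
        (1 * harnack w p + (p.1 - σ) * dirDeriv (timeDir n) (harnack w) p) p.1 :=
      ((hasDerivAt_id p.1).sub_const σ).mul
        (hasDerivAt_timeSlice (hP.differentiableAt_of_isOpen hU hpU))
    simpa using hθ.nonneg_of_isMaxOn_Icc (sub_pos.1 hτ)
      (isMaxOn_iff.2 fun s hs ↦ hmax (s, p.2) ⟨⟨hs.1, hs.2.trans hpt⟩, trivial⟩)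
  have hevol := harnack_timeDeriv_le hw hU hheat hpU (fun i ↦ (hspace i).1)
    (Finset.sum_nonpos fun i _ ↦ (hspace i).2) hPpos.le
  have hQP : 2 * n * harnack w p < (p.1 - σ) * harnack w p * harnack w p :=
    mul_lt_mul_of_pos_right hQ hPpos
  nlinarith [mul_le_mul_of_nonneg_left hevol hτ.le,
    mul_nonneg (by positivity : (0 : ℝ) ≤ 2 * n) htime]

include hper

theorem harnack_mul_le {σ t : ℝ} (hσ : 0 < σ) (hσt : σ < t) (x : Fin n → ℝ) :
    (t - σ) * harnack w (t, x) ≤ 2 * n := by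
  have hU : IsOpen (Ioi (0 : ℝ) ×ˢ (univ : Set (Fin n → ℝ))) := isOpen_Ioi.prod isOpen_univ
  have hslab : Icc σ t ×ˢ (univ : Set (Fin n → ℝ)) ⊆ Ioi 0 ×ˢ univ :=
    prod_mono (fun s hs ↦ hσ.trans_le hs.1) le_rfl
  set Q : ℝ × (Fin n → ℝ) → ℝ := fun q ↦ (q.1 - σ) * harnack w q
  have hQper : ∀ s ∈ Icc σ t, ∀ y (m : Fin n → ℤ), Q (s, y + fun i ↦ (m i : ℝ)) = Q (s, y) :=
    fun s hs y m ↦ by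
      simpa [Q] using congrArg (fun P ↦ (s - σ) * P) ((hper m).harnack_comp_add_right hU
        (hslab (show (s, y) ∈ Icc σ t ×ˢ univ from ⟨hs, trivial⟩)))
  have hQcont : ContinuousOn Q (Icc σ t ×ˢ univ) :=
    ((continuousOn_fst.sub continuousOn_const).mul (hw.harnack hU).continuousOn).mono hslab
  obtain ⟨p, hp, hmax⟩ := exists_isMaxOn_prod_univ_of_periodic isCompact_Icc
    (nonempty_Icc.2 hσt.le) hQcont hQper
  exact (isMaxOn_iff.1 hmax (t, x) ⟨⟨hσt.le, le_rfl⟩, trivial⟩).trans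
    (mul_harnack_le_of_isMaxOn hw hheat hσ hp (isMaxOn_iff.1 hmax))

theorem harnack_le {t : ℝ} (ht : 0 < t) (x : Fin n → ℝ) : harnack w (t, x) ≤ 2 * n / t := by
  rw [le_div_iff₀ ht, mul_comm]
  have hlim : Tendsto (fun σ ↦ (t - σ) * harnack w (t, x)) (𝓝[>] 0)
      (𝓝 (t * harnack w (t, x))) := by
    have hcont : Continuous fun σ ↦ (t - σ) * harnack w (t, x) := by fun_prop
    simpa using (hcont.tendsto 0).mono_left nhdsWithin_le_nhds
  refine le_of_tendsto hlim ?_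
  filter_upwards [Ioo_mem_nhdsGT ht] with σ hσ using harnack_mul_le hw hheat hper hσ.1 hσ.2 x

end MaximumPrinciple
section Slices

variable {n : ℕ}

theorem pd_slice {H : ℝ × (Fin n → ℝ) → ℝ} {t : ℝ} {x : Fin n → ℝ} (i : Fin n)
    (hH : DifferentiableAt ℝ H (t, x)) :
    pd i (fun y ↦ H (t, y)) x = dirDeriv (spaceDir i) H (t, x) := by
  have hslice : HasFDerivAt (fun y ↦ H (t, y))
      ((fderiv ℝ H (t, x)).comp (ContinuousLinearMap.inr ℝ ℝ (Fin n → ℝ))) x :=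
    hH.hasFDerivAt.comp x (hasFDerivAt_prodMk_right t x)
  rw [pd, hslice.fderiv]
  rfl

theorem lap_slice {H : ℝ × (Fin n → ℝ) → ℝ} {t : ℝ} (hH : ContDiffOn ℝ ∞ H (Ioi 0 ×ˢ univ))
    (ht : 0 < t) (x : Fin n → ℝ) : lap (fun y ↦ H (t, y)) x = spaceLap H (t, x) := by
  have hU : IsOpen (Ioi (0 : ℝ) ×ˢ (univ : Set (Fin n → ℝ))) := isOpen_Ioi.prod isOpen_univ
  have hmem : ∀ y : Fin n → ℝ, (t, y) ∈ Ioi 0 ×ˢ univ := fun _ ↦ ⟨ht, trivial⟩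
  refine Finset.sum_congr rfl fun i _ ↦ ?_
  have hfirst : pd i (fun y ↦ H (t, y)) = fun y ↦ dirDeriv (spaceDir i) H (t, y) :=
    funext fun y ↦ pd_slice i (hH.differentiableAt_of_isOpen hU (hmem y))
  rw [hfirst, pd_slice i ((hH.dirDeriv hU _).differentiableAt_of_isOpen hU (hmem x))]

theorem gradSq_slice {H : ℝ × (Fin n → ℝ) → ℝ} {t : ℝ} {x : Fin n → ℝ}
    (hH : DifferentiableAt ℝ H (t, x)) : gradSq (fun y ↦ H (t, y)) x = gradInner H H (t, x) :=
  Finset.sum_congr rfl fun i _ ↦ by rw [pd_slice i hH, sq]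

theorem pd_neg (i : Fin n) (h : (Fin n → ℝ) → ℝ) : pd i (-h) = -pd i h := by
  ext y
  simp [pd, fderiv_neg]

theorem pd_neg_sub_const (i : Fin n) (h : (Fin n → ℝ) → ℝ) (c : ℝ) :
    pd i (fun y ↦ -h y - c) = -pd i h := by
  ext y
  simp [pd, fderiv_sub_const, fderiv_fun_neg]

theorem lap_neg_sub_const (h : (Fin n → ℝ) → ℝ) (c : ℝ) (x : Fin n → ℝ) :
    lap (fun y ↦ -h y - c) x = -lap h x := by
  simp [lap, pd_neg_sub_const, pd_neg]

theorem gradSq_neg_sub_const (h : (Fin n → ℝ) → ℝ) (c : ℝ) (x : Fin n → ℝ) :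
    gradSq (fun y ↦ -h y - c) x = gradSq h x := by
  simp [gradSq, pd_neg_sub_const]

end Slices

theorem harnack_P_nonpos_general
    (n : ℕ) (f : ℝ → (Fin n → ℝ) → ℝ)
    (hsmooth : ContDiffOn ℝ (⊤ : ℕ∞) (fun p : ℝ × (Fin n → ℝ) => f p.1 p.2)
      (Set.Ioi 0 ×ˢ Set.univ))
    (hpos : ∀ t > (0:ℝ), ∀ x : Fin n → ℝ, 0 < f t x)
    (hheat : ∀ t > (0:ℝ), ∀ x : Fin n → ℝ, deriv (fun s => f s x) t = lap (f t) x)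
    (hper : ∀ t > (0:ℝ), ∀ x : Fin n → ℝ, ∀ m : Fin n → ℤ,
      f t (x + fun i => (m i : ℝ)) = f t x)
    (v : ℝ → (Fin n → ℝ) → ℝ)
    (hv : ∀ t x, v t x = -Real.log (f t x) - (n / 2 : ℝ) * Real.log (4 * π * t))
    (P : ℝ → (Fin n → ℝ) → ℝ)
    (hP : ∀ t x, P t x = 2 * lap (v t) x - gradSq (v t) x - 2 * n / t) :
    ∀ t > (0:ℝ), ∀ x : Fin n → ℝ, P t x ≤ 0 := by
  intro t ht x
  have hU : IsOpen (Ioi (0 : ℝ) ×ˢ (univ : Set (Fin n → ℝ))) := isOpen_Ioi.prod isOpen_univ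
  set g : ℝ × (Fin n → ℝ) → ℝ := fun p ↦ f p.1 p.2
  set w : ℝ × (Fin n → ℝ) → ℝ := fun p ↦ log (g p)
  have hgheat : ∀ p ∈ Ioi 0 ×ˢ univ, dirDeriv (timeDir n) g p = spaceLap g p := fun p hp ↦ by
    rw [← (hasDerivAt_timeSlice (hsmooth.differentiableAt_of_isOpen hU hp)).deriv,
      ← lap_slice hsmooth hp.1]
    exact hheat p.1 hp.1 p.2
  have hw : ContDiffOn ℝ ∞ w (Ioi 0 ×ˢ univ) := hsmooth.log fun p hp ↦ (hpos p.1 hp.1 p.2).ne'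
  have hwper : ∀ m : Fin n → ℤ, EqOn (fun q ↦ w (q + (0, fun i ↦ (m i : ℝ)))) w (Ioi 0 ×ˢ univ) :=
    fun m q hq ↦ by simp [w, g, hper q.1 hq.1]
  have hbound := harnack_le hw
    (fun p hp ↦ dirDeriv_time_log_of_heat hsmooth hU (fun p hp ↦ hpos p.1 hp.1 p.2) hgheat hp)
    hwper ht x
  have hvt : v t = fun y ↦ -w (t, y) - n / 2 * log (4 * π * t) := funext (hv t)
  rw [hP, hvt, lap_neg_sub_const (fun y ↦ w (t, y)), gradSq_neg_sub_const (fun y ↦ w (t, y)),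
    lap_slice hw ht, gradSq_slice (hw.differentiableAt_of_isOpen hU ⟨ht, trivial⟩)]
  rw [harnack] at hbound
  linarith

/-- Proposition 1.4: the differential Harnack quantity `P = 2Δv − |∇v|² − 2n/t` is
nonpositive, where `v = −ln f − (n/2)ln(4πt)`. -/
theorem harnack_P_nonpos
    (n : ℕ) (hn : 1 ≤ n) (f : ℝ → (Fin n → ℝ) → ℝ)
    (hsmooth : ContDiffOn ℝ (⊤ : ℕ∞) (fun p : ℝ × (Fin n → ℝ) => f p.1 p.2)
      (Set.Ioi 0 ×ˢ Set.univ))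
    (hpos : ∀ t > (0:ℝ), ∀ x : Fin n → ℝ, 0 < f t x)
    (hheat : ∀ t > (0:ℝ), ∀ x : Fin n → ℝ, deriv (fun s => f s x) t = lap (f t) x)
    (hper : ∀ t > (0:ℝ), ∀ x : Fin n → ℝ, ∀ m : Fin n → ℤ,
      f t (x + fun i => (m i : ℝ)) = f t x)
    (v : ℝ → (Fin n → ℝ) → ℝ)
    (hv : ∀ t x, v t x = -Real.log (f t x) - (n / 2 : ℝ) * Real.log (4 * π * t))
    (P : ℝ → (Fin n → ℝ) → ℝ)
    (hP : ∀ t x, P t x = 2 * lap (v t) x - gradSq (v t) x - 2 * n / t) :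
    ∀ t > (0:ℝ), ∀ x : Fin n → ℝ, P t x ≤ 0 :=
  harnack_P_nonpos_general n f hsmooth hpos hheat hper v hv P hP
end
end

section
/- Let n ≥ 1 and let u : (0,∞) × ℝⁿ → ℝ be smooth and satisfy ∂u/∂t = Δu − |∇u|². Define H = 2Δu − |∇u|² − 2n/t. Then H satisfies the evolution equation ∂H/∂t = ΔH − 2⟨∇H, ∇u⟩ − 2|∇²u − (1/t)I|² − 2H/t − 2|∇u|²/t. -/
/-!
Write `G = 2Δu − |∇u|²`, so that `H = G − 2n/t`. Since `∂ₜ` commutes with spatial derivatives,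
`∂ₜG = 2ΔΦ − 2⟨∇u, ∇Φ⟩` with `Φ = ∂ₜu = Δu − |∇u|²`, and Bochner's formula
`Δ|∇u|² = 2|∇²u|² + 2⟨∇u, ∇Δu⟩` turns this into `∂ₜG = ΔG − 2⟨∇G, ∇u⟩ − 2|∇²u|²`.
The terms in `1/t` then come from `|∇²u − I/t|² = |∇²u|² − 2Δu/t + n/t²`.
-/

open MeasureTheory Real

noncomputable section

open Filter Topology Function

section Calculus

variable {E F : Type*} [NormedAddCommGroup E] [NormedSpace ℝ E]
  [NormedAddCommGroup F] [NormedSpace ℝ F]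

theorem fderiv_fderiv_apply_comm {f : E → F} {x : E} (hf : ContDiffAt ℝ 2 f x) (v w : E) :
    fderiv ℝ (fun y => fderiv ℝ f y v) x w = fderiv ℝ (fun y => fderiv ℝ f y w) x v := by
  have hd : DifferentiableAt ℝ (fderiv ℝ f) x :=
    (hf.fderiv_right (m := 1) le_rfl).differentiableAt one_ne_zero
  rw [fderiv_clm_apply hd (differentiableAt_const v),
    fderiv_clm_apply hd (differentiableAt_const w)]
  simpa using hf.isSymmSndFDerivAt (by simp) w v

theorem fderiv_comp_prodMk_right {f : ℝ × E → F} {t : ℝ} {x : E}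
    (hf : DifferentiableAt ℝ f (t, x)) (w : E) :
    fderiv ℝ (fun y => f (t, y)) x w = fderiv ℝ f (t, x) (0, w) := by
  have h : HasFDerivAt (fun y => f (t, y)) _ x :=
    hf.hasFDerivAt.comp x ((hasFDerivAt_const t x).prodMk (hasFDerivAt_id x))
  rw [h.fderiv]; rfl

theorem hasDerivAt_comp_prodMk_left {f : ℝ × E → F} {t : ℝ} {x : E}
    (hf : DifferentiableAt ℝ f (t, x)) :
    HasDerivAt (fun s => f (s, x)) (fderiv ℝ f (t, x) (1, 0)) t :=
  hf.hasFDerivAt.comp_hasDerivAt t ((hasDerivAt_id t).prodMk (hasDerivAt_const t x))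

variable {u : ℝ → E → F} {Ω : Set (ℝ × E)} {t : ℝ} {x : E}

theorem contDiffOn_uncurry_fderiv_apply {k : WithTop ℕ∞}
    (hu : ContDiffOn ℝ (k + 1) (uncurry u) Ω) (hΩ : IsOpen Ω) (w : E) :
    ContDiffOn ℝ k (uncurry fun s y => fderiv ℝ (u s) y w) Ω := by
  refine ((hu.fderiv_of_isOpen hΩ le_rfl).clm_apply (contDiffOn_const (c := ((0 : ℝ), w)))).congr
    fun q hq => ?_
  exact fderiv_comp_prodMk_right ((hu.contDiffAt (hΩ.mem_nhds hq)).differentiableAt (by simp)) w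

theorem hasDerivAt_fderiv_slice (hu : ContDiffOn ℝ 2 (uncurry u) Ω) (hΩ : IsOpen Ω)
    (hp : (t, x) ∈ Ω) (w : E) :
    HasDerivAt (fun s => fderiv ℝ (u s) x w)
      (fderiv ℝ (fun y => deriv (fun s => u s y) t) x w) t := by
  have hdiff : ∀ᶠ q in 𝓝 (t, x), DifferentiableAt ℝ (uncurry u) q := by
    filter_upwards [hΩ.mem_nhds hp] with q hq
    exact (hu.contDiffAt (hΩ.mem_nhds hq)).differentiableAt (by simp)
  have htime : (fun s => fderiv ℝ (u s) x w) =ᶠ[𝓝 t]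
      fun s => fderiv ℝ (uncurry u) (s, x) (0, w) :=
    ((continuous_id.prodMk continuous_const).tendsto t).eventually hdiff |>.mono
      fun s hs => fderiv_comp_prodMk_right hs w
  have hspace : (fun y => deriv (fun s => u s y) t) =ᶠ[𝓝 x]
      fun y => fderiv ℝ (uncurry u) (t, y) (1, 0) :=
    ((continuous_const.prodMk continuous_id).tendsto x).eventually hdiff |>.mono
      fun y hy => (hasDerivAt_comp_prodMk_left hy).deriv
  have hC : ContDiffAt ℝ 2 (uncurry u) (t, x) := hu.contDiffAt (hΩ.mem_nhds hp)
  have hD : ∀ v, DifferentiableAt ℝ (fun q => fderiv ℝ (uncurry u) q v) (t, x) := fun v =>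
    ((hC.fderiv_right (m := 1) le_rfl).clm_apply contDiffAt_const).differentiableAt one_ne_zero
  rw [hspace.fderiv_eq, fderiv_comp_prodMk_right (hD (1, 0)), ← fderiv_fderiv_apply_comm hC]
  exact (hasDerivAt_comp_prodMk_left (hD (0, w))).congr_of_eventuallyEq htime

end Calculus

theorem sum_sq_sub_mul_ite {ι : Type*} [Fintype ι] [DecidableEq ι] (A : ι → ι → ℝ) (c : ℝ) :
    ∑ i, ∑ j, (A i j - c * if i = j then 1 else 0) ^ 2
      = ∑ i, ∑ j, A i j ^ 2 - 2 * c * ∑ i, A i i + Fintype.card ι * c ^ 2 := by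
  have h : ∀ i j, (A i j - c * if i = j then 1 else 0) ^ 2
      = A i j ^ 2 + if i = j then c ^ 2 - 2 * c * A i j else 0 := by
    intro i j; split_ifs <;> ring
  simp only [h, Finset.sum_add_distrib, Finset.sum_ite_eq, Finset.mem_univ, if_true,
    Finset.sum_sub_distrib, Finset.mul_sum, Finset.sum_const, Finset.card_univ, nsmul_eq_mul]
  ring

section PartialDerivatives

variable {n : ℕ} {f g : (Fin n → ℝ) → ℝ} {x : Fin n → ℝ} {i j : Fin n}

theorem pd_sub (hf : DifferentiableAt ℝ f x) (hg : DifferentiableAt ℝ g x) :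
    pd i (fun y => f y - g y) x = pd i f x - pd i g x := by
  simp only [pd, fderiv_fun_sub hf hg, sub_apply]

theorem pd_sub_const (c : ℝ) : pd i (fun y => f y - c) x = pd i f x := by
  simp only [pd, fderiv_sub_const]

theorem pd_const_mul (hf : DifferentiableAt ℝ f x) (c : ℝ) :
    pd i (fun y => c * f y) x = c * pd i f x := by
  simp only [pd, fderiv_const_mul hf, smul_apply, smul_eq_mul]

theorem pd_mul (hf : DifferentiableAt ℝ f x) (hg : DifferentiableAt ℝ g x) :
    pd i (fun y => f y * g y) x = pd i f x * g x + f x * pd i g x := by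
  simp only [pd, fderiv_fun_mul hf hg, add_apply,
    smul_apply, smul_eq_mul]
  ring

theorem pd_sum {ι : Type*} {s : Finset ι} {g : ι → (Fin n → ℝ) → ℝ}
    (hg : ∀ k ∈ s, DifferentiableAt ℝ (g k) x) :
    pd i (fun y => ∑ k ∈ s, g k y) x = ∑ k ∈ s, pd i (g k) x := by
  simp only [pd, fderiv_fun_sum hg, sum_apply]

theorem pd_comm (hf : ContDiffAt ℝ 2 f x) : pd i (pd j f) x = pd j (pd i f) x :=
  fderiv_fderiv_apply_comm hf _ _

theorem ContDiff.pd {k : WithTop ℕ∞} (hf : ContDiff ℝ (k + 1) f) (i : Fin n) :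
    ContDiff ℝ k (pd i f) :=
  (hf.fderiv_right le_rfl).clm_apply contDiff_const

theorem ContDiff.lap {k : WithTop ℕ∞} (hf : ContDiff ℝ (k + 2) f) : ContDiff ℝ k (lap f) := by
  have hf' : ContDiff ℝ (k + 1 + 1) f := by rwa [add_assoc, one_add_one_eq_two]
  exact ContDiff.sum fun i _ => (hf'.pd i).pd i

theorem ContDiff.gradSq {k : WithTop ℕ∞} (hf : ContDiff ℝ (k + 1) f) :
    ContDiff ℝ k (gradSq f) :=
  ContDiff.sum fun i _ => (hf.pd i).pow 2

theorem Filter.EventuallyEq.pd_eq (h : f =ᶠ[𝓝 x] g) (i : Fin n) : pd i f x = pd i g x := by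
  rw [pd, pd, h.fderiv_eq]

theorem pd_gradSq (hf : ContDiff ℝ 2 f) :
    pd i (gradSq f) x = 2 * ∑ j, pd j f x * pd i (pd j f) x := by
  have hd : ∀ j, Differentiable ℝ (pd j f) := fun j =>
    (ContDiff.pd (k := 1) hf j).differentiable one_ne_zero
  unfold gradSq
  rw [pd_sum (g := fun j y => pd j f y ^ 2) fun j _ => (hd j x).pow 2, Finset.mul_sum]
  refine Finset.sum_congr rfl fun j _ => ?_
  simp_rw [sq]
  rw [pd_mul (hd j x) (hd j x)]
  ring

theorem lap_sub (hf : ContDiff ℝ 2 f) (hg : ContDiff ℝ 2 g) :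
    lap (fun y => f y - g y) x = lap f x - lap g x := by
  rw [lap, lap, lap, ← Finset.sum_sub_distrib]
  refine Finset.sum_congr rfl fun i _ => ?_
  have h : pd i (fun y => f y - g y) = fun y => pd i f y - pd i g y := funext fun y =>
    pd_sub (hf.differentiable two_ne_zero y) (hg.differentiable two_ne_zero y)
  rw [h, pd_sub (((ContDiff.pd (k := 1) hf i).differentiable one_ne_zero) x)
    (((ContDiff.pd (k := 1) hg i).differentiable one_ne_zero) x)]

theorem lap_const_mul (hf : ContDiff ℝ 2 f) (c : ℝ) :
    lap (fun y => c * f y) x = c * lap f x := by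
  rw [lap, lap, Finset.mul_sum]
  refine Finset.sum_congr rfl fun i _ => ?_
  have h : pd i (fun y => c * f y) = fun y => c * pd i f y := funext fun y =>
    pd_const_mul (hf.differentiable two_ne_zero y) c
  rw [h, pd_const_mul (((ContDiff.pd (k := 1) hf i).differentiable one_ne_zero) x)]

theorem lap_sub_const (c : ℝ) : lap (fun y => f y - c) x = lap f x := by
  have h : ∀ i, pd i (fun y => f y - c) = pd i f := fun i => funext fun y => pd_sub_const c
  simp only [lap, h]

theorem pd_lap (hf : ContDiff ℝ 3 f) : pd j (lap f) x = ∑ i, pd i (pd i (pd j f)) x := by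
  have hf2 : ∀ i, ContDiff ℝ 2 (pd i f) := fun i => ContDiff.pd (k := 2) hf i
  unfold lap
  rw [pd_sum (g := fun i => pd i (pd i f)) fun i _ =>
    ((ContDiff.pd (k := 1) (hf2 i) i).differentiable one_ne_zero) x]
  refine Finset.sum_congr rfl fun i _ => ?_
  have h : pd j (pd i f) = pd i (pd j f) :=
    funext fun y => pd_comm ((hf.of_le (by norm_num)).contDiffAt)
  rw [pd_comm (hf2 i).contDiffAt, h]

theorem lap_gradSq (hf : ContDiff ℝ 3 f) :
    lap (gradSq f) x = 2 * ∑ i, ∑ j, hess i j f x ^ 2 + 2 * ∑ j, pd j f x * pd j (lap f) x := by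
  have hd : ∀ j, Differentiable ℝ (pd j f) := fun j =>
    (ContDiff.pd (k := 2) hf j).differentiable two_ne_zero
  have hd2 : ∀ i j, Differentiable ℝ (pd i (pd j f)) := fun i j =>
    (ContDiff.pd (k := 1) (ContDiff.pd (k := 2) hf j) i).differentiable one_ne_zero
  have hgrad : ∀ i, pd i (gradSq f) = fun y => 2 * ∑ j, pd j f y * pd i (pd j f) y :=
    fun i => funext fun y => pd_gradSq (hf.of_le (by norm_num))
  calc lap (gradSq f) x
      = ∑ i, 2 * ∑ j,
          (pd i (pd j f) x * pd i (pd j f) x + pd j f x * pd i (pd i (pd j f)) x) := by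
        refine Finset.sum_congr rfl fun i _ => ?_
        rw [hgrad, pd_const_mul (f := fun y => ∑ j, pd j f y * pd i (pd j f) y)
          (DifferentiableAt.fun_sum fun j _ => (hd j x).mul (hd2 i j x)),
          pd_sum (g := fun j y => pd j f y * pd i (pd j f) y)
            fun j _ => (hd j x).mul (hd2 i j x)]
        simp only [pd_mul (hd _ x) (hd2 _ _ x)]
    _ = _ := by
        simp only [pd_lap hf, hess, sq, Finset.mul_sum, mul_add, Finset.sum_add_distrib]
        congr 1
        exact Finset.sum_comm

-- `Φ = Δf − |∇f|²` plays the role of `∂ₜf`, and the left-hand side is then `∂ₜ(2Δf − |∇f|²)`.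
theorem evolution_identity_two_lap_sub_gradSq (hf : ContDiff ℝ 4 f) (x : Fin n → ℝ) :
    2 * lap (fun y => lap f y - gradSq f y) x
        - 2 * ∑ i, pd i f x * pd i (fun y => lap f y - gradSq f y) x
      = lap (fun y => 2 * lap f y - gradSq f y) x
        - 2 * ∑ i, pd i (fun y => 2 * lap f y - gradSq f y) x * pd i f x
        - 2 * ∑ i, ∑ j, hess i j f x ^ 2 := by
  have hL : ContDiff ℝ 2 (lap f) := hf.lap (k := 2)
  have hG : ContDiff ℝ 3 (gradSq f) := hf.gradSq (k := 3)
  have hLd := hL.differentiable two_ne_zero x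
  have hGd := hG.differentiable (by norm_num) x
  have hsumΦ : ∑ i, pd i f x * pd i (fun y => lap f y - gradSq f y) x
      = ∑ i, pd i f x * pd i (lap f) x - ∑ i, pd i f x * pd i (gradSq f) x := by
    rw [← Finset.sum_sub_distrib]
    exact Finset.sum_congr rfl fun i _ => by rw [pd_sub hLd hGd]; ring
  have hsumG : ∑ i, pd i (fun y => 2 * lap f y - gradSq f y) x * pd i f x
      = 2 * ∑ i, pd i f x * pd i (lap f) x - ∑ i, pd i f x * pd i (gradSq f) x := by
    rw [Finset.mul_sum, ← Finset.sum_sub_distrib]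
    refine Finset.sum_congr rfl fun i _ => ?_
    rw [pd_sub (f := fun y => 2 * lap f y) ((differentiableAt_const 2).mul hLd) hGd,
      pd_const_mul hLd]
    ring
  rw [hsumΦ, hsumG, lap_sub hL (hG.of_le (by norm_num)),
    lap_sub (contDiff_const.mul hL) (hG.of_le (by norm_num)), lap_const_mul hL,
    lap_gradSq (hf.of_le (by norm_num))]
  ring

end PartialDerivatives

section Slices

variable {n : ℕ} {u : ℝ → (Fin n → ℝ) → ℝ} {Ω : Set (ℝ × (Fin n → ℝ))} {t : ℝ} {x : Fin n → ℝ}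

theorem hasDerivAt_lap_slice (hu : ContDiffOn ℝ 3 (uncurry u) Ω) (hΩ : IsOpen Ω)
    (hp : (t, x) ∈ Ω) :
    HasDerivAt (fun s => lap (u s) x) (lap (fun y => deriv (fun s => u s y) t) x) t := by
  refine HasDerivAt.fun_sum fun i _ => ?_
  have hcomm : (fun y => deriv (fun s => pd i (u s) y) t)
      =ᶠ[𝓝 x] pd i (fun y => deriv (fun s => u s y) t) :=
    ((continuous_const.prodMk continuous_id).tendsto x).eventually (hΩ.mem_nhds hp) |>.mono
      fun y hy => (hasDerivAt_fderiv_slice (hu.of_le (by norm_num)) hΩ hy _).deriv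
  have h : HasDerivAt (fun s => pd i (pd i (u s)) x)
      (pd i (fun y => deriv (fun s => pd i (u s) y) t) x) t :=
    hasDerivAt_fderiv_slice (contDiffOn_uncurry_fderiv_apply (k := 2) hu hΩ _) hΩ hp _
  rwa [hcomm.pd_eq] at h

theorem hasDerivAt_gradSq_slice (hu : ContDiffOn ℝ 2 (uncurry u) Ω) (hΩ : IsOpen Ω)
    (hp : (t, x) ∈ Ω) :
    HasDerivAt (fun s => gradSq (u s) x)
      (2 * ∑ i, pd i (u t) x * pd i (fun y => deriv (fun s => u s y) t) x) t := by
  have hsq : ∀ i, HasDerivAt (fun s => pd i (u s) x ^ 2)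
      (2 * (pd i (u t) x * pd i (fun y => deriv (fun s => u s y) t) x)) t := fun i => by
    have h : HasDerivAt (fun s => pd i (u s) x)
        (pd i (fun y => deriv (fun s => u s y) t) x) t :=
      hasDerivAt_fderiv_slice hu hΩ hp _
    exact (h.fun_pow 2).congr_deriv (by ring)
  rw [Finset.mul_sum]
  exact HasDerivAt.fun_sum fun i _ => hsq i

end Slices

theorem evolution_H_general
    (n : ℕ) (u : ℝ → (Fin n → ℝ) → ℝ)
    (hsmooth : ContDiffOn ℝ (⊤ : ℕ∞) (fun p : ℝ × (Fin n → ℝ) => u p.1 p.2)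
      (Set.Ioi 0 ×ˢ Set.univ))
    (heq : ∀ t > (0:ℝ), ∀ x : Fin n → ℝ,
      deriv (fun s => u s x) t = lap (u t) x - gradSq (u t) x)
    (H : ℝ → (Fin n → ℝ) → ℝ)
    (hH : ∀ t x, H t x = 2 * lap (u t) x - gradSq (u t) x - 2 * n / t) :
    ∀ t > (0:ℝ), ∀ x : Fin n → ℝ,
      deriv (fun s => H s x) t =
        lap (H t) x - 2 * (∑ i, pd i (H t) x * pd i (u t) x)
        - 2 * (∑ i, ∑ j, (hess i j (u t) x - (1 / t) * (if i = j then (1:ℝ) else 0)) ^ 2)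
        - 2 * H t x / t - 2 * gradSq (u t) x / t := by
  intro t ht x
  have hΩ : IsOpen (Set.Ioi (0 : ℝ) ×ˢ (Set.univ : Set (Fin n → ℝ))) :=
    isOpen_Ioi.prod isOpen_univ
  have hp : (t, x) ∈ Set.Ioi (0 : ℝ) ×ˢ (Set.univ : Set (Fin n → ℝ)) := ⟨ht, trivial⟩
  have hU : ContDiffOn ℝ 4 (uncurry u) (Set.Ioi 0 ×ˢ Set.univ) :=
    hsmooth.of_le (WithTop.coe_le_coe.mpr le_top)
  have hu : ContDiff ℝ 4 (u t) :=
    hU.comp_contDiff (contDiff_const.prodMk contDiff_id) fun _ => ⟨ht, trivial⟩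
  have hdot : (fun y => deriv (fun s => u s y) t) = fun y => lap (u t) y - gradSq (u t) y :=
    funext (heq t ht)
  have hderiv := (((hasDerivAt_lap_slice (hU.of_le (by norm_num)) hΩ hp).const_mul 2).fun_sub
    (hasDerivAt_gradSq_slice (hU.of_le (by norm_num)) hΩ hp)).fun_sub
    ((hasDerivAt_const t (2 * (n : ℝ))).fun_div (hasDerivAt_id' t) ht.ne')
  simp only [← hH, hdot] at hderiv
  rw [hderiv.deriv, show H t = _ from funext (hH t), lap_sub_const]
  simp only [pd_sub_const]
  have hhess := sum_sq_sub_mul_ite (fun i j => hess i j (u t) x) (1 / t)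
  simp only [Fintype.card_fin] at hhess
  rw [hhess]
  have hlap : lap (u t) x = ∑ i, hess i i (u t) x := rfl
  linear_combination evolution_identity_two_lap_sub_gradSq hu x + (4 / t) * hlap

/-- Corollary 2.2: evolution equation for `H = 2Δu − |∇u|² − 2n/t` when
`∂u/∂t = Δu − |∇u|²` on flat space. -/
theorem evolution_H
    (n : ℕ) (hn : 1 ≤ n) (u : ℝ → (Fin n → ℝ) → ℝ)
    (hsmooth : ContDiffOn ℝ (⊤ : ℕ∞) (fun p : ℝ × (Fin n → ℝ) => u p.1 p.2)
      (Set.Ioi 0 ×ˢ Set.univ))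
    (heq : ∀ t > (0:ℝ), ∀ x : Fin n → ℝ,
      deriv (fun s => u s x) t = lap (u t) x - gradSq (u t) x)
    (H : ℝ → (Fin n → ℝ) → ℝ)
    (hH : ∀ t x, H t x = 2 * lap (u t) x - gradSq (u t) x - 2 * n / t) :
    ∀ t > (0:ℝ), ∀ x : Fin n → ℝ,
      deriv (fun s => H s x) t =
        lap (H t) x - 2 * (∑ i, pd i (H t) x * pd i (u t) x)
        - 2 * (∑ i, ∑ j, (hess i j (u t) x - (1 / t) * (if i = j then (1:ℝ) else 0)) ^ 2)
        - 2 * H t x / t - 2 * gradSq (u t) x / t :=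
  evolution_H_general n u hsmooth heq H hH
end
end
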